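/- Let n, p ≥ 1, let Φ be a real n×p matrix, W a symmetric positive semidefinite real n×n matrix, M̂ a real p×p matrix, θ₀ ∈ ℝ^p with support S = {j : θ₀,ⱼ ≠ 0}, ε ∈ ℝ^n, y = Φθ₀ + ε, λ > 0, μ ≥ 0, c₃ > 0, and Γ̂ = ΦᵀWΦ/n. Suppose (i) θ̂ ∈ ℝ^p satisfies the basic inequality (1/(2n))·(y − Φθ̂)ᵀW(y − Φθ̂) + λ‖θ̂‖₁ ≤ (1/(2n))·(y − Φθ₀)ᵀW(y − Φθ₀) + λ‖θ₀‖₁, (ii) ‖ΦᵀWε/n‖∞ ≤ λ/2, (iii) aᵀΓ̂a ≥ (c₃/2)·‖a_S‖₂² for all a ∈ ℝ^p with ‖a_{S^c}‖₁ ≤ 3‖a_S‖₁, and (iv) every entry of M̂Γ̂ − I has absolute value at most μ. Then the bias term Δ = √n·(M̂Γ̂ − I)(θ̂ − θ₀) satisfies ‖Δ‖∞ ≤ 24·√n·λ·μ·|S|/c₃. -/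

import Mathlib

/-!
With `h = θ̂ - θ₀`, expanding the two weighted residuals turns the basic inequality into
`hᵀΓ̂h / 2 - hᵀ(ΦᵀWε/n) ≤ λ(‖θ₀‖₁ - ‖θ̂‖₁)`. The noise bound controls the cross term by
`(λ/2)‖h‖₁`, and since `θ₀` vanishes off `S`, `‖θ₀‖₁ - ‖θ̂‖₁ ≤ ‖h_S‖₁ - ‖h_{Sᶜ}‖₁`; together,
`hᵀΓ̂h ≤ 3λ‖h_S‖₁ - λ‖h_{Sᶜ}‖₁`. As `Γ̂ ⪰ 0`, `h` lies in the cone `‖h_{Sᶜ}‖₁ ≤ 3‖h_S‖₁`, so the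
restricted eigenvalue condition and Cauchy–Schwarz `‖h_S‖₁² ≤ |S| ‖h_S‖₂²` give
`‖h_S‖₁ ≤ 6λ|S|/c₃`, hence `‖h‖₁ ≤ 24λ|S|/c₃`. Finally each entry of `(M̂Γ̂ - I)h` is at most
`μ‖h‖₁` in absolute value.
-/

open Matrix Finset

lemma Finset.sum_abs_le_of_mul_sum_sq_le {α : Type*} {s : Finset α} {f : α → ℝ} {c K : ℝ}
    (hc : 0 < c) (hK : 0 ≤ K) (h : c * ∑ j ∈ s, f j ^ 2 ≤ K * ∑ j ∈ s, |f j|) :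
    ∑ j ∈ s, |f j| ≤ K * #s / c := by
  have hCS : (∑ j ∈ s, |f j|) ^ 2 ≤ #s * ∑ j ∈ s, f j ^ 2 := by
    simpa only [sq_abs] using sq_sum_le_card_mul_sum_sq (s := s) (f := fun j => |f j|)
  rcases (sum_nonneg fun j _ => abs_nonneg (f j)).eq_or_lt with h0 | h0
  · rw [← h0]; positivity
  · rw [le_div_iff₀ hc]
    refine le_of_mul_le_mul_right ?_ h0
    nlinarith [Nat.cast_nonneg (α := ℝ) #s]

section

variable {ι κ : Type*} [Fintype ι] [Fintype κ]

lemma abs_dotProduct_le_mul_sum_abs {g : κ → ℝ} {c : ℝ} (hg : ∀ j, |g j| ≤ c) (h : κ → ℝ) :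
    |g ⬝ᵥ h| ≤ c * ∑ j, |h j| := by
  rw [mul_sum]
  refine (abs_sum_le_sum_abs _ _).trans (sum_le_sum fun j _ => ?_)
  rw [abs_mul]
  exact mul_le_mul_of_nonneg_right (hg j) (abs_nonneg _)

lemma abs_mulVec_le_mul_sum_abs {m : Type*} {A : Matrix m κ ℝ} {μ : ℝ} (hA : ∀ i j, |A i j| ≤ μ)
    (h : κ → ℝ) (i : m) : |(A *ᵥ h) i| ≤ μ * ∑ j, |h j| :=
  abs_dotProduct_le_mul_sum_abs (hA i) h

lemma sum_abs_sub_sum_abs_le [DecidableEq κ] {θ₀ : κ → ℝ} {S : Finset κ}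
    (hθ₀ : ∀ j ∉ S, θ₀ j = 0) (θ : κ → ℝ) :
    ∑ j, |θ₀ j| - ∑ j, |θ j| ≤ ∑ j ∈ S, |(θ - θ₀) j| - ∑ j ∈ Sᶜ, |(θ - θ₀) j| := by
  have hon : ∑ j ∈ S, |θ₀ j| - ∑ j ∈ S, |θ j| ≤ ∑ j ∈ S, |(θ - θ₀) j| := by
    rw [← sum_sub_distrib]
    refine sum_le_sum fun j _ => ?_
    rw [Pi.sub_apply, abs_sub_comm]
    exact abs_sub_abs_le_abs_sub _ _
  have hoff : ∑ j ∈ Sᶜ, |θ₀ j| = 0 :=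
    sum_eq_zero fun j hj => by rw [hθ₀ j (mem_compl.mp hj), abs_zero]
  have hoff' : ∑ j ∈ Sᶜ, |θ j| = ∑ j ∈ Sᶜ, |(θ - θ₀) j| :=
    sum_congr rfl fun j hj => by rw [Pi.sub_apply, hθ₀ j (mem_compl.mp hj), sub_zero]
  rw [← sum_add_sum_compl S, ← sum_add_sum_compl S (fun j => |θ j|)]
  linarith

lemma residual_quadForm_sub {W : Matrix ι ι ℝ} (hW : W.IsSymm) {Φ : Matrix ι κ ℝ}
    {θ₀ : κ → ℝ} {ε y : ι → ℝ} (hy : y = Φ *ᵥ θ₀ + ε) (θ : κ → ℝ) :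
    (y - Φ *ᵥ θ) ⬝ᵥ W *ᵥ (y - Φ *ᵥ θ) - (y - Φ *ᵥ θ₀) ⬝ᵥ W *ᵥ (y - Φ *ᵥ θ₀)
      = (θ - θ₀) ⬝ᵥ (Φᵀ * W * Φ) *ᵥ (θ - θ₀) - 2 * ((θ - θ₀) ⬝ᵥ Φᵀ *ᵥ (W *ᵥ ε)) := by
  have hres : y - Φ *ᵥ θ = ε - Φ *ᵥ (θ - θ₀) := by
    simp only [hy, mulVec_sub]; abel
  have hres₀ : y - Φ *ᵥ θ₀ = ε := by rw [hy, add_sub_cancel_left]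
  have hpull : ∀ v, (θ - θ₀) ⬝ᵥ Φᵀ *ᵥ v = Φ *ᵥ (θ - θ₀) ⬝ᵥ v := fun v => by
    rw [dotProduct_mulVec, vecMul_transpose]
  rw [hres, hres₀, ← mulVec_mulVec, ← mulVec_mulVec, hpull, hpull]
  generalize Φ *ᵥ (θ - θ₀) = u
  have hsymm : ε ⬝ᵥ W *ᵥ u = u ⬝ᵥ W *ᵥ ε := by
    rw [dotProduct_mulVec, ← mulVec_transpose, hW.eq, dotProduct_comm]
  simp only [mulVec_sub, dotProduct_sub, sub_dotProduct, hsymm]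
  ring

lemma quadForm_le_of_basic_inequality [DecidableEq κ] {n lam : ℝ} (hn : 0 < n) (hlam : 0 ≤ lam)
    {Φ : Matrix ι κ ℝ} {W : Matrix ι ι ℝ} (hW : W.IsSymm) {θ₀ θ : κ → ℝ} {S : Finset κ}
    (hθ₀ : ∀ j ∉ S, θ₀ j = 0) {ε y : ι → ℝ} (hy : y = Φ *ᵥ θ₀ + ε)
    (hbasic : 1 / (2 * n) * ((y - Φ *ᵥ θ) ⬝ᵥ W *ᵥ (y - Φ *ᵥ θ)) + lam * ∑ j, |θ j|
        ≤ 1 / (2 * n) * ((y - Φ *ᵥ θ₀) ⬝ᵥ W *ᵥ (y - Φ *ᵥ θ₀)) + lam * ∑ j, |θ₀ j|)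
    (hnoise : ∀ j, |(Φᵀ *ᵥ (W *ᵥ ε)) j / n| ≤ lam / 2) :
    (θ - θ₀) ⬝ᵥ (n⁻¹ • (Φᵀ * W * Φ)) *ᵥ (θ - θ₀)
      ≤ 3 * lam * ∑ j ∈ S, |(θ - θ₀) j| - lam * ∑ j ∈ Sᶜ, |(θ - θ₀) j| := by
  have hid := residual_quadForm_sub hW hy θ
  have hl1 := mul_le_mul_of_nonneg_left (sum_abs_sub_sum_abs_le hθ₀ θ) hlam
  have hv : ∀ j, |(Φᵀ *ᵥ (W *ᵥ ε)) j| ≤ n * (lam / 2) := fun j => by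
    have := hnoise j
    rwa [abs_div, abs_of_pos hn, div_le_iff₀' hn] at this
  have hcross := (le_abs_self _).trans (abs_dotProduct_le_mul_sum_abs hv (θ - θ₀))
  rw [dotProduct_comm, ← sum_add_sum_compl S] at hcross
  have hdiv : ∀ x : ℝ, 1 / (2 * n) * x = x / (2 * n) := fun x => by ring
  rw [hdiv, hdiv] at hbasic
  rw [smul_mulVec, dotProduct_smul, smul_eq_mul]
  set Q := (θ - θ₀) ⬝ᵥ (Φᵀ * W * Φ) *ᵥ (θ - θ₀)
  set C := (θ - θ₀) ⬝ᵥ Φᵀ *ᵥ (W *ᵥ ε)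
  have hQ : (Q - 2 * C) / (2 * n) ≤ lam * (∑ j, |θ₀ j| - ∑ j, |θ j|) := by
    rw [← hid, sub_div]; linarith
  have hC : n⁻¹ * C ≤ lam / 2 * (∑ j ∈ S, |(θ - θ₀) j| + ∑ j ∈ Sᶜ, |(θ - θ₀) j|) := by
    rw [inv_mul_le_iff₀ hn]; linarith
  have hsplit : n⁻¹ * Q = 2 * ((Q - 2 * C) / (2 * n)) + 2 * (n⁻¹ * C) := by
    field_simp; ring
  linarith

end

theorem debiasing_error_bound_general
    (n p : ℕ) (hn : 1 ≤ n)
    (Φ : Matrix (Fin n) (Fin p) ℝ) (W : Matrix (Fin n) (Fin n) ℝ)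
    (hW : W.PosSemidef)
    (Mhat : Matrix (Fin p) (Fin p) ℝ)
    (θ0 θhat : Fin p → ℝ)
    (S : Finset (Fin p)) (hS : ∀ j, j ∈ S ↔ θ0 j ≠ 0)
    (ε : Fin n → ℝ) (y : Fin n → ℝ) (hy : y = Φ.mulVec θ0 + ε)
    (lam : ℝ) (hlam : 0 < lam) (μ : ℝ) (hμ : 0 ≤ μ) (c3 : ℝ) (hc3 : 0 < c3)
    (Γhat : Matrix (Fin p) (Fin p) ℝ)
    (hΓhat : Γhat = (n : ℝ)⁻¹ • (Φᵀ * W * Φ))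
    (hbasic :
      (1 / (2 * (n : ℝ))) * ((y - Φ.mulVec θhat) ⬝ᵥ W.mulVec (y - Φ.mulVec θhat))
          + lam * ∑ j, |θhat j|
        ≤ (1 / (2 * (n : ℝ))) * ((y - Φ.mulVec θ0) ⬝ᵥ W.mulVec (y - Φ.mulVec θ0))
          + lam * ∑ j, |θ0 j|)
    (hnoise : ∀ j, |(Φᵀ.mulVec (W.mulVec ε)) j / (n : ℝ)| ≤ lam / 2)
    (hRE : ∀ a : Fin p → ℝ, (∑ j ∈ Sᶜ, |a j|) ≤ 3 * ∑ j ∈ S, |a j| →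
      c3 / 2 * (∑ j ∈ S, (a j) ^ 2) ≤ a ⬝ᵥ Γhat.mulVec a)
    (hentry : ∀ i j, |(Mhat * Γhat - 1) i j| ≤ μ) :
    ∀ i, |(Real.sqrt n • (Mhat * Γhat - 1).mulVec (θhat - θ0)) i| ≤
      24 * Real.sqrt n * lam * μ * S.card / c3 := by
  intro i
  have hθ0 : ∀ j ∉ S, θ0 j = 0 := fun j hj => not_not.mp (mt (hS j).mpr hj)
  have hΓ : Γhat.PosSemidef := by
    rw [hΓhat, ← conjTranspose_eq_transpose_of_trivial]
    exact (hW.conjTranspose_mul_mul_same Φ).smul (by positivity)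
  have hquad := quadForm_le_of_basic_inequality (Nat.cast_pos.mpr hn) hlam.le
    (isHermitian_iff_isSymm.mp hW.isHermitian) hθ0 hy hbasic hnoise
  rw [← hΓhat] at hquad
  have hnonneg := hΓ.dotProduct_mulVec_nonneg (θhat - θ0)
  rw [star_trivial] at hnonneg
  have hcone : ∑ j ∈ Sᶜ, |(θhat - θ0) j| ≤ 3 * ∑ j ∈ S, |(θhat - θ0) j| :=
    le_of_mul_le_mul_left (by linarith) hlam
  have hRE' := (hRE _ hcone).trans (hquad.trans (sub_le_self _ (by positivity)))
  have hon : ∑ j ∈ S, |(θhat - θ0) j| ≤ 3 * lam * S.card / (c3 / 2) :=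
    sum_abs_le_of_mul_sum_sq_le (by positivity) (by positivity) hRE'
  have hl1 : ∑ j, |(θhat - θ0) j| ≤ 24 * lam * S.card / c3 := by
    rw [← sum_add_sum_compl S]
    calc _ ≤ 4 * (3 * lam * S.card / (c3 / 2)) := by linarith
      _ = 24 * lam * S.card / c3 := by field_simp; ring
  calc |(Real.sqrt n • (Mhat * Γhat - 1) *ᵥ (θhat - θ0)) i|
      = Real.sqrt n * |((Mhat * Γhat - 1) *ᵥ (θhat - θ0)) i| := by
        rw [Pi.smul_apply, smul_eq_mul, abs_mul, abs_of_nonneg (Real.sqrt_nonneg _)]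
    _ ≤ Real.sqrt n * (μ * (24 * lam * S.card / c3)) := by
        gcongr
        exact (abs_mulVec_le_mul_sum_abs hentry _ i).trans (by gcongr)
    _ = 24 * Real.sqrt n * lam * μ * S.card / c3 := by ring

/-- Deterministic core of Theorem 1(b): on the event `‖ΦᵀWε/n‖∞ ≤ λ/2`, under the
restricted eigenvalue condition and the entry-wise bound `|M̂Γ̂ − I|∞ ≤ μ`, the
debiasing error `Δ = √n (M̂Γ̂ − I)(θ̂ − θ₀)` satisfies `‖Δ‖∞ ≤ 24 √n λ μ |S| / c₃`. -/
theorem debiasing_error_bound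
    (n p : ℕ) (hn : 1 ≤ n) (hp : 1 ≤ p)
    (Φ : Matrix (Fin n) (Fin p) ℝ) (W : Matrix (Fin n) (Fin n) ℝ)
    (hW : W.PosSemidef)
    (Mhat : Matrix (Fin p) (Fin p) ℝ)
    (θ0 θhat : Fin p → ℝ)
    (S : Finset (Fin p)) (hS : ∀ j, j ∈ S ↔ θ0 j ≠ 0)
    (ε : Fin n → ℝ) (y : Fin n → ℝ) (hy : y = Φ.mulVec θ0 + ε)
    (lam : ℝ) (hlam : 0 < lam) (μ : ℝ) (hμ : 0 ≤ μ) (c3 : ℝ) (hc3 : 0 < c3)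
    (Γhat : Matrix (Fin p) (Fin p) ℝ)
    (hΓhat : Γhat = (n : ℝ)⁻¹ • (Φᵀ * W * Φ))
    (hbasic :
      (1 / (2 * (n : ℝ))) * ((y - Φ.mulVec θhat) ⬝ᵥ W.mulVec (y - Φ.mulVec θhat))
          + lam * ∑ j, |θhat j|
        ≤ (1 / (2 * (n : ℝ))) * ((y - Φ.mulVec θ0) ⬝ᵥ W.mulVec (y - Φ.mulVec θ0))
          + lam * ∑ j, |θ0 j|)
    (hnoise : ∀ j, |(Φᵀ.mulVec (W.mulVec ε)) j / (n : ℝ)| ≤ lam / 2)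
    (hRE : ∀ a : Fin p → ℝ, (∑ j ∈ Sᶜ, |a j|) ≤ 3 * ∑ j ∈ S, |a j| →
      c3 / 2 * (∑ j ∈ S, (a j) ^ 2) ≤ a ⬝ᵥ Γhat.mulVec a)
    (hentry : ∀ i j, |(Mhat * Γhat - 1) i j| ≤ μ) :
    ∀ i, |(Real.sqrt n • (Mhat * Γhat - 1).mulVec (θhat - θ0)) i| ≤
      24 * Real.sqrt n * lam * μ * S.card / c3 :=
  debiasing_error_bound_general n p hn Φ W hW Mhat θ0 θhat S hS ε y hy lam hlam μ hμ c3 hc3 Γhat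
    hΓhat hbasic hnoise hRE hentry
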